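/- Let A, B, C, D ∈ ℂ with AD − BC ≠ 0, and let H be the Goursat Hermitian matrix built from A, B, C, D. Then det H = (BC)²·(AD − BC − A − D + 1)³·(AD − BC)³. -/
import Mathlib


open Matrix

/-- The Goursat Hermitian matrix built from parameters `A, B, C, D`, with
`E = (A+D−1)/(AD−BC)`. -/
noncomputable def goursatH (A B C D : ℂ) : Matrix (Fin 4) (Fin 4) ℂ :=
  (A * D - B * C) •
    !![C * (1 - D * ((A + D - 1) / (A * D - B * C))),
         B * C * ((A + D - 1) / (A * D - B * C)), C * (1 - D), B * C;
       B * C * ((A + D - 1) / (A * D - B * C)),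
         B * (1 - A * ((A + D - 1) / (A * D - B * C))), B * C, B * (1 - A);
       C * (1 - D), B * C, C * (1 - D), B * C;
       B * C, B * (1 - A), B * C, B * (1 - A)]

lemma my_det_fin_four {R : Type*} [CommRing R] (M : Matrix (Fin 4) (Fin 4) R) :
    M.det =
      M 0 0 * (M 1 1 * (M 2 2 * M 3 3 - M 2 3 * M 3 2) - M 1 2 * (M 2 1 * M 3 3 - M 2 3 * M 3 1)
        + M 1 3 * (M 2 1 * M 3 2 - M 2 2 * M 3 1))
      - M 0 1 * (M 1 0 * (M 2 2 * M 3 3 - M 2 3 * M 3 2) - M 1 2 * (M 2 0 * M 3 3 - M 2 3 * M 3 0)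
        + M 1 3 * (M 2 0 * M 3 2 - M 2 2 * M 3 0))
      + M 0 2 * (M 1 0 * (M 2 1 * M 3 3 - M 2 3 * M 3 1) - M 1 1 * (M 2 0 * M 3 3 - M 2 3 * M 3 0)
        + M 1 3 * (M 2 0 * M 3 1 - M 2 1 * M 3 0))
      - M 0 3 * (M 1 0 * (M 2 1 * M 3 2 - M 2 2 * M 3 1) - M 1 1 * (M 2 0 * M 3 2 - M 2 2 * M 3 0)
        + M 1 2 * (M 2 0 * M 3 1 - M 2 1 * M 3 0)) := by
  rw [det_succ_row_zero, Fin.sum_univ_four]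
  norm_num [det_fin_three, submatrix_apply, Fin.succAbove, Fin.lt_def,
    show (((3:Fin 4):ℕ) = 3) from rfl, show ((2:Fin 3).castSucc = (2:Fin 4)) from rfl, show ((2:Fin 3).succ = (3:Fin 4)) from rfl]
  ring

set_option maxHeartbeats 2000000 in
/-- The determinant of the Goursat Hermitian matrix is
`(BC)²·(AD−BC−A−D+1)³·(AD−BC)³`. -/
theorem stmt_11 (A B C D : ℂ) (h : A * D - B * C ≠ 0) :
    (goursatH A B C D).det =
      (B * C) ^ 2 * (A * D - B * C - A - D + 1) ^ 3 * (A * D - B * C) ^ 3 := by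
  rw [goursatH, det_smul, Fintype.card_fin, my_det_fin_four]
  simp only [of_apply, cons_val', cons_val_zero, cons_val_one, head_cons, empty_val',
    cons_val_fin_one, head_fin_const, cons_val_two, tail_cons, cons_val_three, head_fin_const]
  field_simp
  ring
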